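/- Let φ be a formula in the left-flat fragment of TeamLTL(⩔,A¹), and define the HyperQPTL quantifier-free translation [φ,r] with free propositional parameters r, r¹,…,rⁿ and free trace variable π inductively by: [p,r] = G(r_π → p_π); [¬p,r] = G(r_π → ¬p_π); [Xφ,r] = G(r_π ↔ X r^φ_π) ∧ [φ,r^φ]; [A¹φ,r] = G(r_π → φ̂), where ∀π.φ̂ is the ∀HyperLTL translation of the flat formula φ; [φ∧ψ,r] = [φ,r] ∧ [ψ,r]; [φ∨ψ,r] = [φ,r] ∨ [ψ,r]; [φ⩔ψ,r] = (d^{φ⩔ψ}_π → [φ,r]) ∧ (¬d^{φ⩔ψ}_π → [ψ,r]); [φWψ,r] = G(r_π → r^φ_π W (r^ψ_π ∧ XG¬r^ψ_π)) (and analogously for U). Let i ∈ ℕ and let s ∈ (2^{{r}})^ω have r set exactly at position i. Then for every team (T,i): (T,i) ⊨ φ if and only if ∅,0 ⊨_{T[r↦s]} ∃r¹…∃rⁿ.∀π.[φ,r], where the quantifiers ∃rʲ are uniform propositional quantifiers. -/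
import Mathlib


set_option maxHeartbeats 1000000

universe u

/-- A trace over the set `α` of atomic propositions: an infinite sequence of
sets of propositions. -/
abbrev Trace (α : Type u) := ℕ → Set α

/-- LTL formulae in negation normal form. -/
inductive LTLForm (α : Type u) : Type u where
  | pos : α → LTLForm α
  | neg : α → LTLForm α
  | lor : LTLForm α → LTLForm α → LTLForm α
  | land : LTLForm α → LTLForm α → LTLForm α
  | next : LTLForm α → LTLForm α
  | luntil : LTLForm α → LTLForm α → LTLForm α
  | wuntil : LTLForm α → LTLForm α → LTLForm α

namespace LTLForm
variable {α : Type u}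

/-- Standard single-trace LTL semantics. -/
def sat (t : Trace α) : ℕ → LTLForm α → Prop
  | i, pos p => p ∈ t i
  | i, neg p => p ∉ t i
  | i, lor φ ψ => sat t i φ ∨ sat t i ψ
  | i, land φ ψ => sat t i φ ∧ sat t i ψ
  | i, next φ => sat t (i+1) φ
  | i, luntil φ ψ => ∃ k, i ≤ k ∧ sat t k ψ ∧ ∀ m, i ≤ m → m < k → sat t m φ
  | i, wuntil φ ψ => ∀ k, i ≤ k → sat t k φ ∨ ∃ m, i ≤ m ∧ m ≤ k ∧ sat t m ψ

/-- Size of an LTL formula. -/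
def size : LTLForm α → ℕ
  | pos _ => 1
  | neg _ => 1
  | lor φ ψ => φ.size + ψ.size + 1
  | land φ ψ => φ.size + ψ.size + 1
  | next φ => φ.size + 1
  | luntil φ ψ => φ.size + ψ.size + 1
  | wuntil φ ψ => φ.size + ψ.size + 1

end LTLForm

/-- Extensions of `TeamLTL` by atoms and connectives:
Boolean disjunction `⩔`, Boolean negation `∼`, inclusion atoms `⊆`,
the universal subteam quantifier `A`, the singleton subteam quantifier `A¹`
and the non-emptiness atom `∼⊥`. -/
inductive TExt : Type where
  | bdis | bneg | incl | asub | asub1 | nebot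
deriving DecidableEq

/-- Formulae of TeamLTL together with all the extensions considered in the paper
(fragments are carved out via `TeamForm.exts`). -/
inductive TeamForm (α : Type u) : Type u where
  | pos : α → TeamForm α
  | neg : α → TeamForm α
  | lor : TeamForm α → TeamForm α → TeamForm α
  | land : TeamForm α → TeamForm α → TeamForm α
  | next : TeamForm α → TeamForm α
  | luntil : TeamForm α → TeamForm α → TeamForm α
  | wuntil : TeamForm α → TeamForm α → TeamForm α
  | bdis : TeamForm α → TeamForm α → TeamForm α
  | bneg : TeamForm α → TeamForm α
  | incl : List (LTLForm α × LTLForm α) → TeamForm α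
  | asub : TeamForm α → TeamForm α
  | asub1 : TeamForm α → TeamForm α
  | nebot : TeamForm α

namespace TeamForm
variable {α : Type u}

/-- Synchronous team semantics for (extended) TeamLTL. -/
def sat : Set (Trace α) → ℕ → TeamForm α → Prop
  | T, i, pos p => ∀ t ∈ T, p ∈ t i
  | T, i, neg p => ∀ t ∈ T, p ∉ t i
  | T, i, lor φ ψ => ∃ T₁ T₂, T₁ ∪ T₂ = T ∧ sat T₁ i φ ∧ sat T₂ i ψ
  | T, i, land φ ψ => sat T i φ ∧ sat T i ψ
  | T, i, next φ => sat T (i+1) φ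
  | T, i, luntil φ ψ => ∃ k, i ≤ k ∧ sat T k ψ ∧ ∀ m, i ≤ m → m < k → sat T m φ
  | T, i, wuntil φ ψ => ∀ k, i ≤ k → sat T k φ ∨ ∃ m, i ≤ m ∧ m ≤ k ∧ sat T m ψ
  | T, i, bdis φ ψ => sat T i φ ∨ sat T i ψ
  | T, i, bneg φ => ¬ sat T i φ
  | T, i, incl ps => ∀ t ∈ T, ∃ t' ∈ T, ∀ p ∈ ps, (LTLForm.sat t i p.1 ↔ LTLForm.sat t' i p.2)
  | T, i, asub φ => ∀ S, S ⊆ T → sat S i φ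
  | T, i, asub1 φ => ∀ t ∈ T, sat {t} i φ
  | T, _, nebot => T.Nonempty

/-- The collection of extensions (atoms/connectives beyond core TeamLTL)
occurring in a formula. -/
def exts : TeamForm α → Set TExt
  | pos _ => ∅
  | neg _ => ∅
  | lor φ ψ => exts φ ∪ exts ψ
  | land φ ψ => exts φ ∪ exts ψ
  | next φ => exts φ
  | luntil φ ψ => exts φ ∪ exts ψ
  | wuntil φ ψ => exts φ ∪ exts ψ
  | bdis φ ψ => insert TExt.bdis (exts φ ∪ exts ψ)
  | bneg φ => insert TExt.bneg (exts φ)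
  | incl _ => {TExt.incl}
  | asub φ => insert TExt.asub (exts φ)
  | asub1 φ => insert TExt.asub1 (exts φ)
  | nebot => {TExt.nebot}

/-- Size of an (extended) TeamLTL formula. -/
def size : TeamForm α → ℕ
  | pos _ => 1
  | neg _ => 1
  | lor φ ψ => φ.size + ψ.size + 1
  | land φ ψ => φ.size + ψ.size + 1
  | next φ => φ.size + 1
  | luntil φ ψ => φ.size + ψ.size + 1
  | wuntil φ ψ => φ.size + ψ.size + 1
  | bdis φ ψ => φ.size + ψ.size + 1
  | bneg φ => φ.size + 1
  | incl ps => (ps.map (fun p => p.1.size + p.2.size)).sum + 1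
  | asub φ => φ.size + 1
  | asub1 φ => φ.size + 1
  | nebot => 1

end TeamForm

universe v

/-- Quantifier-free formulae of HyperLTL / HyperQPTL(⁺) over atomic
propositions `α` and trace variables `V`, in negation normal form. -/
inductive QF (α : Type u) (V : Type v) : Type (max u v) where
  | pos : α → V → QF α V
  | neg : α → V → QF α V
  | lor : QF α V → QF α V → QF α V
  | land : QF α V → QF α V → QF α V
  | next : QF α V → QF α V
  | luntil : QF α V → QF α V → QF α V
  | wuntil : QF α V → QF α V → QF α V

namespace QF
variable {α : Type u} {V : Type v}

/-- Semantics of quantifier-free hyperlogic formulae with respect to a trace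
assignment `asgn` and a time point `i` (time advances uniformly on all
traces). -/
def sat (asgn : V → Trace α) : ℕ → QF α V → Prop
  | i, pos p π => p ∈ asgn π i
  | i, neg p π => p ∉ asgn π i
  | i, lor φ ψ => sat asgn i φ ∨ sat asgn i ψ
  | i, land φ ψ => sat asgn i φ ∧ sat asgn i ψ
  | i, next φ => sat asgn (i+1) φ
  | i, luntil φ ψ => ∃ k, i ≤ k ∧ sat asgn k ψ ∧ ∀ m, i ≤ m → m < k → sat asgn m φ
  | i, wuntil φ ψ => ∀ k, i ≤ k → sat asgn k φ ∨ ∃ m, i ≤ m ∧ m ≤ k ∧ sat asgn m ψ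

/-- Size of a quantifier-free formula. -/
def size : QF α V → ℕ
  | pos _ _ => 1
  | neg _ _ => 1
  | lor φ ψ => φ.size + ψ.size + 1
  | land φ ψ => φ.size + ψ.size + 1
  | next φ => φ.size + 1
  | luntil φ ψ => φ.size + ψ.size + 1
  | wuntil φ ψ => φ.size + ψ.size + 1

/-- Negation of a quantifier-free formula, in negation normal form. -/
def dual : QF α V → QF α V
  | pos p π => neg p π
  | neg p π => pos p π
  | lor φ ψ => land (dual φ) (dual ψ)
  | land φ ψ => lor (dual φ) (dual ψ)
  | next φ => next (dual φ)
  | luntil φ ψ => wuntil (dual ψ) (land (dual φ) (dual ψ))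
  | wuntil φ ψ => luntil (dual ψ) (land (dual φ) (dual ψ))

end QF

/-- Formulae of HyperQPTL⁺: a quantifier prefix consisting of trace
quantifiers (`exTr`/`allTr`), uniform propositional quantifiers
(`exU`/`allU`) and non-uniform propositional quantifiers (`exN`/`allN`),
followed by a quantifier-free formula.  HyperQPTL is the fragment without
`exN`/`allN`; HyperLTL is the fragment with only trace quantifiers. -/
inductive HQ (α : Type u) (V : Type v) : Type (max u v) where
  | qf : QF α V → HQ α V
  | exTr : V → HQ α V → HQ α V
  | allTr : V → HQ α V → HQ α V
  | exU : α → HQ α V → HQ α V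
  | allU : α → HQ α V → HQ α V
  | exN : α → HQ α V → HQ α V
  | allN : α → HQ α V → HQ α V

namespace HQ
variable {α : Type u} {V : Type v}

/-- Reinterpretation of the proposition `q` along a trace according to the
`q`-sequence `s`. -/
def reint (q : α) (s : ℕ → Prop) (t : Trace α) : Trace α :=
  fun j => {a | (a = q ∧ s j) ∨ (a ≠ q ∧ a ∈ t j)}

/-- Projection of a trace to the propositions other than `q`. -/
def proj (q : α) (t : Trace α) : Trace α :=
  fun j => {a | a ≠ q ∧ a ∈ t j}

/-- Semantics of HyperQPTL⁺ over a set `T` of traces, a trace assignment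
`asgn` and a time point `i`. -/
def sat [DecidableEq V] (T : Set (Trace α)) (asgn : V → Trace α) (i : ℕ) :
    HQ α V → Prop
  | qf ψ => QF.sat asgn i ψ
  | exTr π φ => ∃ t ∈ T, sat T (Function.update asgn π t) i φ
  | allTr π φ => ∀ t ∈ T, sat T (Function.update asgn π t) i φ
  | exU q φ => ∃ s : ℕ → Prop,
      sat ((reint q s) '' T) (fun π => reint q s (asgn π)) i φ
  | allU q φ => ∀ s : ℕ → Prop,
      sat ((reint q s) '' T) (fun π => reint q s (asgn π)) i φ
  | exN q φ => ∃ (T' : Set (Trace α)) (asgn' : V → Trace α),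
      (proj q '' T = proj q '' T') ∧ (∀ π, proj q (asgn π) = proj q (asgn' π)) ∧
      (∀ π, asgn' π ∈ T') ∧ sat T' asgn' i φ
  | allN q φ => ∀ (T' : Set (Trace α)) (asgn' : V → Trace α),
      (proj q '' T = proj q '' T') → (∀ π, proj q (asgn π) = proj q (asgn' π)) →
      (∀ π, asgn' π ∈ T') → sat T' asgn' i φ

/-- A sentence is satisfied by a set of traces at time `i` if it holds under
every (equivalently, under some) trace assignment. -/
def sentSat [DecidableEq V] (T : Set (Trace α)) (i : ℕ) (φ : HQ α V) : Prop :=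
  ∀ asgn : V → Trace α, sat T asgn i φ

/-- Size of a HyperQPTL⁺ formula. -/
def size : HQ α V → ℕ
  | qf ψ => ψ.size + 1
  | exTr _ φ => φ.size + 1
  | allTr _ φ => φ.size + 1
  | exU _ φ => φ.size + 1
  | allU _ φ => φ.size + 1
  | exN _ φ => φ.size + 1
  | allN _ φ => φ.size + 1

end HQ

/-- Lifting a trace over `α` to a trace over `α ⊕ ℕ` (the original
propositions, together with countably many fresh propositions that never
hold). -/
def liftTrace {α : Type u} (t : Trace α) : Trace (α ⊕ ℕ) :=
  fun j => Sum.inl '' t j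

/-- Lifting a team over `α` to a team over `α ⊕ ℕ`. -/
def liftTeam {α : Type u} (T : Set (Trace α)) : Set (Trace (α ⊕ ℕ)) :=
  liftTrace '' T

namespace FlatBlock
variable {α : Type u}

/-- A TeamLTL formula is flat if its satisfaction by a team is equivalent to
its satisfaction by all singleton subteams. -/
def Flat (φ : TeamForm α) : Prop :=
  ∀ (T : Set (Trace α)) (i : ℕ),
    TeamForm.sat T i φ ↔ ∀ t ∈ T, TeamForm.sat {t} i φ

/-- A formula belongs to the left-flat fragment if in each of its subformulae
of the form `ψ U φ` or `ψ W φ` the left-hand formula `ψ` is flat. -/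
def LeftFlat : TeamForm α → Prop
  | .pos _ => True
  | .neg _ => True
  | .lor φ ψ => LeftFlat φ ∧ LeftFlat ψ
  | .land φ ψ => LeftFlat φ ∧ LeftFlat ψ
  | .next φ => LeftFlat φ
  | .luntil φ ψ => Flat φ ∧ LeftFlat φ ∧ LeftFlat ψ
  | .wuntil φ ψ => Flat φ ∧ LeftFlat φ ∧ LeftFlat ψ
  | .bdis φ ψ => LeftFlat φ ∧ LeftFlat ψ
  | .bneg φ => LeftFlat φ
  | .incl _ => True
  | .asub φ => LeftFlat φ
  | .asub1 φ => LeftFlat φ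
  | .nebot => True

end FlatBlock

namespace Stmt12
open FlatBlock
variable {α : Type u}

/-- The atom `r_π` for the fresh proposition with index `m` (the matrix of the
translation has the single free trace variable `π`). -/
def atomP (m : ℕ) : QF (α ⊕ ℕ) Unit := QF.pos (Sum.inr m) ()

/-- The negated atom `¬r_π`. -/
def natomP (m : ℕ) : QF (α ⊕ ℕ) Unit := QF.neg (Sum.inr m) ()

/-- A falsity `⊥`. -/
def botF : QF (α ⊕ ℕ) Unit := QF.land (atomP 0) (natomP 0)

/-- A tautology `⊤`. -/
def topF : QF (α ⊕ ℕ) Unit := QF.lor (atomP 0) (natomP 0)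

/-- `G ψ := ψ W ⊥`. -/
def gG (ψ : QF (α ⊕ ℕ) Unit) : QF (α ⊕ ℕ) Unit := QF.wuntil ψ botF

/-- `r_π → ψ` in negation normal form. -/
def implA (m : ℕ) (ψ : QF (α ⊕ ℕ) Unit) : QF (α ⊕ ℕ) Unit :=
  QF.lor (natomP m) ψ

/-- `r_π ↔ X r'_π` in negation normal form. -/
def iffNx (r r' : ℕ) : QF (α ⊕ ℕ) Unit :=
  QF.land (QF.lor (natomP r) (QF.next (atomP r')))
    (QF.lor (QF.next (natomP r')) (atomP r))

/-- The `∀HyperLTL` translation `φ̂` of a flat formula `φ` of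
`TeamLTL(⩔,A¹)`: on singleton teams the splitting disjunction and `⩔`
coincide with classical disjunction, and `A¹` is transparent. -/
def hat : TeamForm α → QF (α ⊕ ℕ) Unit
  | .pos p => QF.pos (Sum.inl p) ()
  | .neg p => QF.neg (Sum.inl p) ()
  | .lor φ ψ => QF.lor (hat φ) (hat ψ)
  | .land φ ψ => QF.land (hat φ) (hat ψ)
  | .next φ => QF.next (hat φ)
  | .luntil φ ψ => QF.luntil (hat φ) (hat ψ)
  | .wuntil φ ψ => QF.wuntil (hat φ) (hat ψ)
  | .bdis φ ψ => QF.lor (hat φ) (hat ψ)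
  | .bneg φ => (hat φ).dual
  | .incl _ => topF
  | .asub φ => hat φ
  | .asub1 φ => hat φ
  | .nebot => topF

/-- The quantifier-free HyperQPTL translation `[φ, r]` of a left-flat
`TeamLTL(⩔,A¹)`-formula relative to the fresh proposition (index) `r`.
The second argument of `tr` is the index of `r`, the third is a counter
supplying fresh indices for the propositions `r^φ` and `d^{φ⩔ψ}`; the
result is the translated formula together with the updated counter:
`[p,r] = G(r_π → p_π)`, `[¬p,r] = G(r_π → ¬p_π)`,
`[Xφ,r] = G(r_π ↔ X r^φ_π) ∧ [φ,r^φ]`, `[A¹φ,r] = G(r_π → φ̂)`,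
`[φ∧ψ,r] = [φ,r] ∧ [ψ,r]`, `[φ∨ψ,r] = [φ,r] ∨ [ψ,r]`,
`[φ⩔ψ,r] = (d_π → [φ,r]) ∧ (¬d_π → [ψ,r])`,
`[φWψ,r] = G(r_π → r^φ_π W (r^ψ_π ∧ XG¬r^ψ_π)) ∧ G(r^φ_π → φ̂) ∧ [ψ,r^ψ]`
(using flatness of `φ`), and analogously for `U`. -/
def tr : TeamForm α → ℕ → ℕ → QF (α ⊕ ℕ) Unit × ℕ
  | .pos p, r, c => (gG (implA r (QF.pos (Sum.inl p) ())), c)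
  | .neg p, r, c => (gG (implA r (QF.neg (Sum.inl p) ())), c)
  | .next φ, r, c =>
      let res := tr φ c (c+1)
      (QF.land (gG (iffNx r c)) res.1, res.2)
  | .asub1 φ, r, c => (gG (implA r (hat φ)), c)
  | .land φ ψ, r, c =>
      let res₁ := tr φ r c
      let res₂ := tr ψ r res₁.2
      (QF.land res₁.1 res₂.1, res₂.2)
  | .lor φ ψ, r, c =>
      let res₁ := tr φ r c
      let res₂ := tr ψ r res₁.2
      (QF.lor res₁.1 res₂.1, res₂.2)
  | .bdis φ ψ, r, c =>
      let res₁ := tr φ r (c+1)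
      let res₂ := tr ψ r res₁.2
      (QF.land (QF.lor (natomP c) res₁.1) (QF.lor (atomP c) res₂.1), res₂.2)
  | .wuntil φ ψ, r, c =>
      let res := tr ψ (c+1) (c+2)
      (QF.land
        (gG (implA r (QF.wuntil (atomP c)
          (QF.land (atomP (c+1)) (QF.next (gG (natomP (c+1))))))))
        (QF.land (gG (implA c (hat φ))) res.1), res.2)
  | .luntil φ ψ, r, c =>
      let res := tr ψ (c+1) (c+2)
      (QF.land
        (gG (implA r (QF.luntil (atomP c)
          (QF.land (atomP (c+1)) (QF.next (gG (natomP (c+1))))))))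
        (QF.land (gG (implA c (hat φ))) res.1), res.2)
  | .bneg φ, r, c => (topF, c)
  | .incl _, _, c => (topF, c)
  | .asub φ, r, c => (topF, c)
  | .nebot, _, c => (topF, c)

/-- Interpreting a trace `t` over `α` as a trace over `α ⊕ ℕ`, where the
fresh proposition with index `m` holds at position `j` iff `interp m j`. -/
def aug (t : Trace α) (interp : ℕ → ℕ → Prop) : Trace (α ⊕ ℕ) :=
  fun j => {x | Sum.elim (fun a => a ∈ t j) (fun m => interp m j) x}

section Lemmas
variable {α : Type u}

lemma mem_aug_inl {t : Trace α} {interp : ℕ → ℕ → Prop} {p : α} {j : ℕ} :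
    Sum.inl p ∈ aug t interp j ↔ p ∈ t j := Iff.rfl

lemma mem_aug_inr {t : Trace α} {interp : ℕ → ℕ → Prop} {m j : ℕ} :
    Sum.inr m ∈ aug t interp j ↔ interp m j := Iff.rfl

lemma sat_empty (φ : TeamForm α) (h : φ.exts ⊆ {TExt.bdis, TExt.asub1}) :
    ∀ i : ℕ, TeamForm.sat (∅ : Set (Trace α)) i φ := by
  induction φ with
  | pos p => intro i t ht; cases ht
  | neg p => intro i t ht; cases ht
  | lor φ ψ ih₁ ih₂ =>
      intro i
      exact ⟨∅, ∅, by simp, ih₁ (fun x hx => h (Or.inl hx)) i,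
        ih₂ (fun x hx => h (Or.inr hx)) i⟩
  | land φ ψ ih₁ ih₂ =>
      intro i
      exact ⟨ih₁ (fun x hx => h (Or.inl hx)) i, ih₂ (fun x hx => h (Or.inr hx)) i⟩
  | next φ ih => intro i; exact ih h (i+1)
  | luntil φ ψ ih₁ ih₂ =>
      intro i
      exact ⟨i, le_refl i, ih₂ (fun x hx => h (Or.inr hx)) i,
        fun m _ _ => ih₁ (fun x hx => h (Or.inl hx)) m⟩
  | wuntil φ ψ ih₁ ih₂ =>
      intro i k _
      exact Or.inl (ih₁ (fun x hx => h (Or.inl hx)) k)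
  | bdis φ ψ ih₁ ih₂ =>
      intro i
      exact Or.inl (ih₁ (fun x hx => h (Set.mem_insert_of_mem _ (Or.inl hx))) i)
  | bneg φ ih =>
      have hx := h (Set.mem_insert _ _); simp at hx
  | incl ps => intro i t ht; cases ht
  | asub φ ih =>
      have hx := h (Set.mem_insert _ _); simp at hx
  | asub1 φ ih => intro i t ht; cases ht
  | nebot =>
      have hx := h rfl; simp at hx

lemma sat_hat (φ : TeamForm α) (h : φ.exts ⊆ {TExt.bdis, TExt.asub1})
    (t : Trace α) (interp : ℕ → ℕ → Prop) :
    ∀ i, TeamForm.sat {t} i φ ↔ QF.sat (fun _ : Unit => aug t interp) i (hat φ) := by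
  induction φ with
  | pos p =>
      intro i
      constructor
      · intro hs; exact hs t rfl
      · intro hs t' ht'; cases ht'; exact hs
  | neg p =>
      intro i
      constructor
      · intro hs; exact hs t rfl
      · intro hs t' ht'; cases ht'; exact hs
  | lor φ ψ ih₁ ih₂ =>
      intro i
      have hφ : φ.exts ⊆ {TExt.bdis, TExt.asub1} := fun x hx => h (Or.inl hx)
      have hψ : ψ.exts ⊆ {TExt.bdis, TExt.asub1} := fun x hx => h (Or.inr hx)
      constructor
      · rintro ⟨T₁, T₂, hU, h1, h2⟩
        have ht : t ∈ T₁ ∪ T₂ := by rw [hU]; rfl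
        rcases ht with ht | ht
        · have hT₁ : T₁ = {t} := by
            apply le_antisymm
            · rw [← hU]; exact Set.subset_union_left
            · exact Set.singleton_subset_iff.mpr ht
          exact Or.inl ((ih₁ hφ i).mp (hT₁ ▸ h1))
        · have hT₂ : T₂ = {t} := by
            apply le_antisymm
            · rw [← hU]; exact Set.subset_union_right
            · exact Set.singleton_subset_iff.mpr ht
          exact Or.inr ((ih₂ hψ i).mp (hT₂ ▸ h2))
      · rintro (hs | hs)
        · exact ⟨{t}, ∅, by simp, (ih₁ hφ i).mpr hs, sat_empty ψ hψ i⟩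
        · exact ⟨∅, {t}, by simp, sat_empty φ hφ i, (ih₂ hψ i).mpr hs⟩
  | land φ ψ ih₁ ih₂ =>
      intro i
      have hφ : φ.exts ⊆ {TExt.bdis, TExt.asub1} := fun x hx => h (Or.inl hx)
      have hψ : ψ.exts ⊆ {TExt.bdis, TExt.asub1} := fun x hx => h (Or.inr hx)
      exact and_congr (ih₁ hφ i) (ih₂ hψ i)
  | next φ ih => intro i; exact ih h (i+1)
  | luntil φ ψ ih₁ ih₂ =>
      intro i
      have hφ : φ.exts ⊆ {TExt.bdis, TExt.asub1} := fun x hx => h (Or.inl hx)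
      have hψ : ψ.exts ⊆ {TExt.bdis, TExt.asub1} := fun x hx => h (Or.inr hx)
      constructor
      · rintro ⟨k, hk, h1, h2⟩
        exact ⟨k, hk, (ih₂ hψ k).mp h1, fun m hm1 hm2 => (ih₁ hφ m).mp (h2 m hm1 hm2)⟩
      · rintro ⟨k, hk, h1, h2⟩
        exact ⟨k, hk, (ih₂ hψ k).mpr h1, fun m hm1 hm2 => (ih₁ hφ m).mpr (h2 m hm1 hm2)⟩
  | wuntil φ ψ ih₁ ih₂ =>
      intro i
      have hφ : φ.exts ⊆ {TExt.bdis, TExt.asub1} := fun x hx => h (Or.inl hx)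
      have hψ : ψ.exts ⊆ {TExt.bdis, TExt.asub1} := fun x hx => h (Or.inr hx)
      constructor
      · intro hs k hk
        rcases hs k hk with h1 | ⟨m, hm1, hm2, hm3⟩
        · exact Or.inl ((ih₁ hφ k).mp h1)
        · exact Or.inr ⟨m, hm1, hm2, (ih₂ hψ m).mp hm3⟩
      · intro hs k hk
        rcases hs k hk with h1 | ⟨m, hm1, hm2, hm3⟩
        · exact Or.inl ((ih₁ hφ k).mpr h1)
        · exact Or.inr ⟨m, hm1, hm2, (ih₂ hψ m).mpr hm3⟩
  | bdis φ ψ ih₁ ih₂ =>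
      intro i
      have hφ : φ.exts ⊆ {TExt.bdis, TExt.asub1} :=
        fun x hx => h (Set.mem_insert_of_mem _ (Or.inl hx))
      have hψ : ψ.exts ⊆ {TExt.bdis, TExt.asub1} :=
        fun x hx => h (Set.mem_insert_of_mem _ (Or.inr hx))
      exact or_congr (ih₁ hφ i) (ih₂ hψ i)
  | bneg φ ih =>
      have hx := h (Set.mem_insert _ _); simp at hx
  | incl ps =>
      have hx := h rfl; simp at hx
  | asub φ ih =>
      have hx := h (Set.mem_insert _ _); simp at hx
  | asub1 φ ih =>
      intro i
      have hφ : φ.exts ⊆ {TExt.bdis, TExt.asub1} :=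
        fun x hx => h (Set.mem_insert_of_mem _ hx)
      constructor
      · intro hs; exact (ih hφ i).mp (hs t rfl)
      · intro hs t' ht'; cases ht'; exact (ih hφ i).mpr hs
  | nebot =>
      have hx := h rfl; simp at hx

lemma sat_botF (asgn : Unit → Trace (α ⊕ ℕ)) (k : ℕ) :
    ¬ QF.sat asgn k (botF (α := α)) := fun h => h.2 h.1

lemma sat_topF (asgn : Unit → Trace (α ⊕ ℕ)) (k : ℕ) :
    QF.sat asgn k (topF (α := α)) := by
  by_cases h : Sum.inr 0 ∈ asgn () k
  · exact Or.inl h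
  · exact Or.inr h

lemma sat_gG {asgn : Unit → Trace (α ⊕ ℕ)} {k : ℕ} {ψ : QF (α ⊕ ℕ) Unit} :
    QF.sat asgn k (gG ψ) ↔ ∀ m, k ≤ m → QF.sat asgn m ψ := by
  constructor
  · intro h m hm
    rcases h m hm with h | ⟨m', _, _, hb⟩
    · exact h
    · exact absurd hb (sat_botF _ _)
  · intro h m hm
    exact Or.inl (h m hm)

lemma sat_implA {asgn : Unit → Trace (α ⊕ ℕ)} {k r : ℕ} {ψ : QF (α ⊕ ℕ) Unit} :
    QF.sat asgn k (implA r ψ) ↔ (Sum.inr r ∈ asgn () k → QF.sat asgn k ψ) := by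
  show (Sum.inr r ∉ asgn () k) ∨ _ ↔ _
  tauto

/-- The set of atoms used in a quantifier-free formula. -/
def uses {β : Type u} {V : Type v} : QF β V → Set β
  | .pos a _ => {a}
  | .neg a _ => {a}
  | .lor φ ψ => uses φ ∪ uses ψ
  | .land φ ψ => uses φ ∪ uses ψ
  | .next φ => uses φ
  | .luntil φ ψ => uses φ ∪ uses ψ
  | .wuntil φ ψ => uses φ ∪ uses ψ

lemma sat_congr {β : Type u} {V : Type v} (asgn₁ asgn₂ : V → Trace β)
    (ξ : QF β V) (h : ∀ a ∈ uses ξ, ∀ π j, a ∈ asgn₁ π j ↔ a ∈ asgn₂ π j) :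
    ∀ k, QF.sat asgn₁ k ξ ↔ QF.sat asgn₂ k ξ := by
  induction ξ with
  | pos p π => intro k; exact h p rfl π k
  | neg p π => intro k; exact not_congr (h p rfl π k)
  | lor φ ψ ih₁ ih₂ =>
      intro k
      exact or_congr (ih₁ (fun a ha => h a (Or.inl ha)) k)
        (ih₂ (fun a ha => h a (Or.inr ha)) k)
  | land φ ψ ih₁ ih₂ =>
      intro k
      exact and_congr (ih₁ (fun a ha => h a (Or.inl ha)) k)
        (ih₂ (fun a ha => h a (Or.inr ha)) k)
  | next φ ih => intro k; exact ih h (k+1)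
  | luntil φ ψ ih₁ ih₂ =>
      intro k
      have e₁ := ih₁ (fun a ha => h a (Or.inl ha))
      have e₂ := ih₂ (fun a ha => h a (Or.inr ha))
      constructor
      · rintro ⟨m, hm, h1, h2⟩
        exact ⟨m, hm, (e₂ m).mp h1, fun m' hm1 hm2 => (e₁ m').mp (h2 m' hm1 hm2)⟩
      · rintro ⟨m, hm, h1, h2⟩
        exact ⟨m, hm, (e₂ m).mpr h1, fun m' hm1 hm2 => (e₁ m').mpr (h2 m' hm1 hm2)⟩
  | wuntil φ ψ ih₁ ih₂ =>
      intro k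
      have e₁ := ih₁ (fun a ha => h a (Or.inl ha))
      have e₂ := ih₂ (fun a ha => h a (Or.inr ha))
      constructor
      · intro hs m hm
        rcases hs m hm with h1 | ⟨m', hm1, hm2, hm3⟩
        · exact Or.inl ((e₁ m).mp h1)
        · exact Or.inr ⟨m', hm1, hm2, (e₂ m').mp hm3⟩
      · intro hs m hm
        rcases hs m hm with h1 | ⟨m', hm1, hm2, hm3⟩
        · exact Or.inl ((e₁ m).mpr h1)
        · exact Or.inr ⟨m', hm1, hm2, (e₂ m').mpr hm3⟩

lemma uses_dual {β : Type u} {V : Type v} (ξ : QF β V) : uses ξ.dual ⊆ uses ξ := by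
  induction ξ with
  | pos p π => exact fun a ha => ha
  | neg p π => exact fun a ha => ha
  | lor φ ψ ih₁ ih₂ => intro a ha; rcases ha with ha | ha
                       · exact Or.inl (ih₁ ha)
                       · exact Or.inr (ih₂ ha)
  | land φ ψ ih₁ ih₂ => intro a ha; rcases ha with ha | ha
                        · exact Or.inl (ih₁ ha)
                        · exact Or.inr (ih₂ ha)
  | next φ ih => exact fun a ha => ih ha
  | luntil φ ψ ih₁ ih₂ =>
      intro a ha
      rcases ha with ha | ha | ha
      · exact Or.inr (ih₂ ha)
      · exact Or.inl (ih₁ ha)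
      · exact Or.inr (ih₂ ha)
  | wuntil φ ψ ih₁ ih₂ =>
      intro a ha
      rcases ha with ha | ha | ha
      · exact Or.inr (ih₂ ha)
      · exact Or.inl (ih₁ ha)
      · exact Or.inr (ih₂ ha)

lemma uses_hat (φ : TeamForm α) :
    ∀ a ∈ uses (hat φ), (∃ p, a = Sum.inl p) ∨ a = Sum.inr 0 := by
  induction φ with
  | pos p => rintro a rfl; exact Or.inl ⟨p, rfl⟩
  | neg p => rintro a rfl; exact Or.inl ⟨p, rfl⟩
  | lor φ ψ ih₁ ih₂ => rintro a (ha | ha); exacts [ih₁ a ha, ih₂ a ha]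
  | land φ ψ ih₁ ih₂ => rintro a (ha | ha); exacts [ih₁ a ha, ih₂ a ha]
  | next φ ih => exact ih
  | luntil φ ψ ih₁ ih₂ => rintro a (ha | ha); exacts [ih₁ a ha, ih₂ a ha]
  | wuntil φ ψ ih₁ ih₂ => rintro a (ha | ha); exacts [ih₁ a ha, ih₂ a ha]
  | bdis φ ψ ih₁ ih₂ => rintro a (ha | ha); exacts [ih₁ a ha, ih₂ a ha]
  | bneg φ ih => exact fun a ha => ih a (uses_dual _ ha)
  | incl ps => rintro a (rfl | rfl) <;> exact Or.inr rfl
  | asub φ ih => exact ih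
  | asub1 φ ih => exact ih
  | nebot => rintro a (rfl | rfl) <;> exact Or.inr rfl

lemma tr_mono (φ : TeamForm α) : ∀ r c, c ≤ (tr φ r c).2 := by
  induction φ with
  | pos p => intro r c; exact le_refl c
  | neg p => intro r c; exact le_refl c
  | lor φ ψ ih₁ ih₂ =>
      intro r c
      exact le_trans (ih₁ r c) (ih₂ r (tr φ r c).2)
  | land φ ψ ih₁ ih₂ =>
      intro r c
      exact le_trans (ih₁ r c) (ih₂ r (tr φ r c).2)
  | next φ ih =>
      intro r c
      exact le_trans (Nat.le_succ c) (ih c (c+1))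
  | luntil φ ψ ih₁ ih₂ =>
      intro r c
      exact le_trans (by omega) (ih₂ (c+1) (c+2))
  | wuntil φ ψ ih₁ ih₂ =>
      intro r c
      exact le_trans (by omega) (ih₂ (c+1) (c+2))
  | bdis φ ψ ih₁ ih₂ =>
      intro r c
      exact le_trans (by omega) (le_trans (ih₁ r (c+1)) (ih₂ r (tr φ r (c+1)).2))
  | bneg φ ih => intro r c; exact le_refl c
  | incl ps => intro r c; exact le_refl c
  | asub φ ih => intro r c; exact le_refl c
  | asub1 φ ih => intro r c; exact le_refl c
  | nebot => intro r c; exact le_refl c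

lemma uses_tr (φ : TeamForm α) : ∀ r c m, Sum.inr m ∈ uses (tr φ r c).1 →
    m = 0 ∨ m = r ∨ (c ≤ m ∧ m < (tr φ r c).2) := by
  induction φ with
  | pos p =>
      intro r c m hm
      simp [tr, uses, gG, implA, botF, atomP, natomP] at hm
      omega
  | neg p =>
      intro r c m hm
      simp [tr, uses, gG, implA, botF, atomP, natomP] at hm
      omega
  | lor φ ψ ih₁ ih₂ =>
      intro r c m hm
      have h1 := tr_mono φ r c
      have h2 := tr_mono ψ r (tr φ r c).2
      simp only [tr, uses, Set.mem_union] at hm ⊢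
      rcases hm with hm | hm
      · have := ih₁ r c m hm; omega
      · have := ih₂ r (tr φ r c).2 m hm; omega
  | land φ ψ ih₁ ih₂ =>
      intro r c m hm
      have h1 := tr_mono φ r c
      have h2 := tr_mono ψ r (tr φ r c).2
      simp only [tr, uses, Set.mem_union] at hm ⊢
      rcases hm with hm | hm
      · have := ih₁ r c m hm; omega
      · have := ih₂ r (tr φ r c).2 m hm; omega
  | next φ ih =>
      intro r c m hm
      have h1 := tr_mono φ c (c+1)
      simp [tr, uses, gG, implA, iffNx, botF, atomP, natomP] at hm ⊢
      rcases hm with hm | hm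
      · omega
      · have := ih c (c+1) m hm; omega
  | luntil φ ψ ih₁ ih₂ =>
      intro r c m hm
      have h1 := tr_mono ψ (c+1) (c+2)
      simp [tr, uses, gG, implA, botF, atomP, natomP] at hm ⊢
      rcases hm with hm | (hm | hm | hm) | hm
      · omega
      · omega
      · omega
      · rcases uses_hat φ _ hm with ⟨p, hp⟩ | hp
        · exact absurd hp (by simp)
        · simp at hp; omega
      · have := ih₂ (c+1) (c+2) m hm; omega
  | wuntil φ ψ ih₁ ih₂ =>
      intro r c m hm
      have h1 := tr_mono ψ (c+1) (c+2)
      simp [tr, uses, gG, implA, botF, atomP, natomP] at hm ⊢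
      rcases hm with hm | (hm | hm | hm) | hm
      · omega
      · omega
      · omega
      · rcases uses_hat φ _ hm with ⟨p, hp⟩ | hp
        · exact absurd hp (by simp)
        · simp at hp; omega
      · have := ih₂ (c+1) (c+2) m hm; omega
  | bdis φ ψ ih₁ ih₂ =>
      intro r c m hm
      have h1 := tr_mono φ r (c+1)
      have h2 := tr_mono ψ r (tr φ r (c+1)).2
      simp [tr, uses, atomP, natomP] at hm ⊢
      rcases hm with (hm | hm) | hm
      · omega
      · have := ih₁ r (c+1) m hm; omega
      · have := ih₂ r (tr φ r (c+1)).2 m hm; omega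
  | bneg φ ih =>
      intro r c m hm
      simp [tr, uses, topF, atomP, natomP] at hm; omega
  | incl ps =>
      intro r c m hm
      simp [tr, uses, topF, atomP, natomP] at hm; omega
  | asub φ ih =>
      intro r c m hm
      simp [tr, uses, topF, atomP, natomP] at hm; omega
  | asub1 φ ih =>
      intro r c m hm
      simp [tr, uses, gG, implA, botF, atomP, natomP] at hm
      rcases hm with hm | hm | hm
      · omega
      · omega
      · rcases uses_hat φ _ hm with ⟨p, hp⟩ | hp
        · exact absurd hp (by simp)
        · simp at hp; omega
  | nebot =>
      intro r c m hm
      simp [tr, uses, topF, atomP, natomP] at hm; omega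

lemma tr_invariant (φ : TeamForm α) (r c : ℕ) (hrc : r < c) (t : Trace α)
    (interp interp' : ℕ → ℕ → Prop)
    (h : ∀ m, m < (tr φ r c).2 → ∀ j, (interp m j ↔ interp' m j)) (k : ℕ) :
    (QF.sat (fun _ : Unit => aug t interp) k (tr φ r c).1 ↔
     QF.sat (fun _ : Unit => aug t interp') k (tr φ r c).1) := by
  have hend := tr_mono φ r c
  apply sat_congr
  intro a ha π j
  match a with
  | Sum.inl p => exact Iff.rfl
  | Sum.inr m =>
      show interp m j ↔ interp' m j
      rcases uses_tr φ r c m ha with h0 | hrm | ⟨h1, h2⟩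
      · subst h0; exact h 0 (by omega) j
      · subst hrm; exact h m (by omega) j
      · exact h m h2 j

lemma tr_vac (φ : TeamForm α) : ∀ r c, r < c → ∀ interp : ℕ → ℕ → Prop,
    (∀ j, ¬ interp r j) →
    ∃ interp' : ℕ → ℕ → Prop, (∀ m, m < c → ∀ j, (interp' m j ↔ interp m j)) ∧
      ∀ t : Trace α, QF.sat (fun _ : Unit => aug t interp') 0 (tr φ r c).1 := by
  induction φ with
  | pos p =>
      intro r c hrc interp hr
      refine ⟨interp, fun m _ j => Iff.rfl, fun t => ?_⟩
      simp only [tr]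
      rw [sat_gG]
      intro m _
      rw [sat_implA]
      intro hm
      exact absurd hm (hr m)
  | neg p =>
      intro r c hrc interp hr
      refine ⟨interp, fun m _ j => Iff.rfl, fun t => ?_⟩
      simp only [tr]
      rw [sat_gG]
      intro m _
      rw [sat_implA]
      intro hm
      exact absurd hm (hr m)
  | lor φ ψ ih₁ ih₂ =>
      intro r c hrc interp hr
      obtain ⟨i₁, hag₁, hs₁⟩ := ih₁ r c hrc interp hr
      refine ⟨i₁, hag₁, fun t => ?_⟩
      simp only [tr]
      exact Or.inl (hs₁ t)
  | land φ ψ ih₁ ih₂ =>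
      intro r c hrc interp hr
      have hmono := tr_mono φ r c
      obtain ⟨i₁, hag₁, hs₁⟩ := ih₁ r c hrc interp hr
      have hr₁ : ∀ j, ¬ i₁ r j := fun j h => hr j ((hag₁ r hrc j).mp h)
      obtain ⟨i₂, hag₂, hs₂⟩ := ih₂ r (tr φ r c).2 (by omega) i₁ hr₁
      refine ⟨i₂, ?_, fun t => ?_⟩
      · intro m hm j
        rw [hag₂ m (by omega) j, hag₁ m hm j]
      · simp only [tr]
        exact ⟨(tr_invariant φ r c hrc t i₁ i₂
            (fun m hm j => (hag₂ m hm j).symm) 0).mp (hs₁ t), hs₂ t⟩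
  | next φ ih =>
      intro r c hrc interp hr
      obtain ⟨i₁, hag₁, hs₁⟩ := ih c (c+1) (by omega)
        (Function.update interp c (fun _ => False))
        (fun j h => by rw [Function.update_self] at h; exact h)
      have hagr : ∀ m, m < c → ∀ j, (i₁ m j ↔ interp m j) := by
        intro m hm j
        rw [hag₁ m (by omega) j, Function.update_of_ne (by omega)]
      refine ⟨i₁, hagr, fun t => ?_⟩
      simp only [tr]
      refine ⟨?_, hs₁ t⟩
      rw [sat_gG]
      intro m _
      constructor
      · refine Or.inl ?_
        show ¬ i₁ r m
        intro h
        have h2 := (hag₁ r (by omega) m).mp h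
        rw [Function.update_of_ne (by omega)] at h2
        exact hr m h2
      · refine Or.inl ?_
        show ¬ i₁ c (m+1)
        intro h
        have h2 := (hag₁ c (by omega) (m+1)).mp h
        rw [Function.update_self] at h2
        exact h2
  | luntil φ ψ ih₁ ih₂ =>
      intro r c hrc interp hr
      obtain ⟨i₁, hag₁, hs₁⟩ := ih₂ (c+1) (c+2) (by omega)
        (Function.update (Function.update interp c (fun _ => False)) (c+1) (fun _ => False))
        (fun j h => by rw [Function.update_self] at h; exact h)
      have hagr : ∀ m, m < c → ∀ j, (i₁ m j ↔ interp m j) := by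
        intro m hm j
        rw [hag₁ m (by omega) j, Function.update_of_ne (by omega),
          Function.update_of_ne (by omega)]
      refine ⟨i₁, hagr, fun t => ?_⟩
      simp only [tr]
      refine ⟨?_, ?_, hs₁ t⟩
      · rw [sat_gG]
        intro m _
        rw [sat_implA]
        intro hm
        exfalso
        have h2 := (hag₁ r (by omega) m).mp hm
        rw [Function.update_of_ne (by omega), Function.update_of_ne (by omega)] at h2
        exact hr m h2
      · rw [sat_gG]
        intro m _
        rw [sat_implA]
        intro hm
        exfalso
        have h2 := (hag₁ c (by omega) m).mp hm
        rw [Function.update_of_ne (by omega), Function.update_self] at h2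
        exact h2
  | wuntil φ ψ ih₁ ih₂ =>
      intro r c hrc interp hr
      obtain ⟨i₁, hag₁, hs₁⟩ := ih₂ (c+1) (c+2) (by omega)
        (Function.update (Function.update interp c (fun _ => False)) (c+1) (fun _ => False))
        (fun j h => by rw [Function.update_self] at h; exact h)
      have hagr : ∀ m, m < c → ∀ j, (i₁ m j ↔ interp m j) := by
        intro m hm j
        rw [hag₁ m (by omega) j, Function.update_of_ne (by omega),
          Function.update_of_ne (by omega)]
      refine ⟨i₁, hagr, fun t => ?_⟩
      simp only [tr]
      refine ⟨?_, ?_, hs₁ t⟩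
      · rw [sat_gG]
        intro m _
        rw [sat_implA]
        intro hm
        exfalso
        have h2 := (hag₁ r (by omega) m).mp hm
        rw [Function.update_of_ne (by omega), Function.update_of_ne (by omega)] at h2
        exact hr m h2
      · rw [sat_gG]
        intro m _
        rw [sat_implA]
        intro hm
        exfalso
        have h2 := (hag₁ c (by omega) m).mp hm
        rw [Function.update_of_ne (by omega), Function.update_self] at h2
        exact h2
  | bdis φ ψ ih₁ ih₂ =>
      intro r c hrc interp hr
      have hmono := tr_mono φ r (c+1)
      obtain ⟨i₁, hag₁, hs₁⟩ := ih₂ r (tr φ r (c+1)).2 (by omega)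
        (Function.update interp c (fun _ => False))
        (fun j h => hr j (by rwa [Function.update_of_ne (by omega)] at h))
      refine ⟨i₁, ?_, fun t => ?_⟩
      · intro m hm j
        rw [hag₁ m (by omega) j, Function.update_of_ne (by omega)]
      · simp only [tr]
        refine ⟨Or.inl ?_, Or.inr (hs₁ t)⟩
        show ¬ i₁ c 0
        intro h
        have h2 := (hag₁ c (by omega) 0).mp h
        rwa [Function.update_self] at h2
  | bneg φ ih =>
      intro r c hrc interp hr
      exact ⟨interp, fun m _ j => Iff.rfl, fun t => sat_topF _ _⟩
  | incl ps =>
      intro r c hrc interp hr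
      exact ⟨interp, fun m _ j => Iff.rfl, fun t => sat_topF _ _⟩
  | asub φ ih =>
      intro r c hrc interp hr
      exact ⟨interp, fun m _ j => Iff.rfl, fun t => sat_topF _ _⟩
  | asub1 φ ih =>
      intro r c hrc interp hr
      refine ⟨interp, fun m _ j => Iff.rfl, fun t => ?_⟩
      simp only [tr]
      rw [sat_gG]
      intro m _
      rw [sat_implA]
      intro hm
      exact absurd hm (hr m)
  | nebot =>
      intro r c hrc interp hr
      exact ⟨interp, fun m _ j => Iff.rfl, fun t => sat_topF _ _⟩

lemma tr_fwd (φ : TeamForm α) :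
    φ.exts ⊆ {TExt.bdis, TExt.asub1} → LeftFlat φ →
    ∀ (T : Set (Trace α)) (i r c : ℕ), r < c →
    TeamForm.sat T i φ →
    ∀ interp : ℕ → ℕ → Prop, (∀ j, interp r j ↔ j = i) →
    ∃ interp' : ℕ → ℕ → Prop, (∀ m, m < c → ∀ j, (interp' m j ↔ interp m j)) ∧
      ∀ t ∈ T, QF.sat (fun _ : Unit => aug t interp') 0 (tr φ r c).1 := by
  classical
  induction φ with
  | pos p =>
      intro hf hlf T i r c hrc hsat interp hr
      refine ⟨interp, fun m _ j => Iff.rfl, fun t ht => ?_⟩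
      simp only [tr]
      rw [sat_gG]
      intro m _
      rw [sat_implA]
      intro hm
      have hmi : m = i := (hr m).mp hm
      subst hmi
      exact hsat t ht
  | neg p =>
      intro hf hlf T i r c hrc hsat interp hr
      refine ⟨interp, fun m _ j => Iff.rfl, fun t ht => ?_⟩
      simp only [tr]
      rw [sat_gG]
      intro m _
      rw [sat_implA]
      intro hm
      have hmi : m = i := (hr m).mp hm
      subst hmi
      exact hsat t ht
  | lor φ ψ ih₁ ih₂ =>
      intro hf hlf T i r c hrc hsat interp hr
      obtain ⟨hlf₁, hlf₂⟩ := hlf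
      obtain ⟨T₁, T₂, hU, h1, h2⟩ := hsat
      subst hU
      have hmono₁ := tr_mono φ r c
      obtain ⟨i₁, hag₁, hs₁⟩ :=
        ih₁ (fun x hx => hf (Or.inl hx)) hlf₁ T₁ i r c hrc h1 interp hr
      have hr₁ : ∀ j, i₁ r j ↔ j = i := fun j => (hag₁ r hrc j).trans (hr j)
      obtain ⟨i₂, hag₂, hs₂⟩ :=
        ih₂ (fun x hx => hf (Or.inr hx)) hlf₂ T₂ i r (tr φ r c).2 (by omega) h2 i₁ hr₁
      refine ⟨i₂, ?_, fun t ht => ?_⟩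
      · intro m hm j
        rw [hag₂ m (by omega) j, hag₁ m hm j]
      · simp only [tr]
        rcases ht with ht | ht
        · exact Or.inl ((tr_invariant φ r c hrc t i₁ i₂
            (fun m hm j => (hag₂ m hm j).symm) 0).mp (hs₁ t ht))
        · exact Or.inr (hs₂ t ht)
  | land φ ψ ih₁ ih₂ =>
      intro hf hlf T i r c hrc hsat interp hr
      obtain ⟨hlf₁, hlf₂⟩ := hlf
      obtain ⟨h1, h2⟩ := hsat
      have hmono₁ := tr_mono φ r c
      obtain ⟨i₁, hag₁, hs₁⟩ :=
        ih₁ (fun x hx => hf (Or.inl hx)) hlf₁ T i r c hrc h1 interp hr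
      have hr₁ : ∀ j, i₁ r j ↔ j = i := fun j => (hag₁ r hrc j).trans (hr j)
      obtain ⟨i₂, hag₂, hs₂⟩ :=
        ih₂ (fun x hx => hf (Or.inr hx)) hlf₂ T i r (tr φ r c).2 (by omega) h2 i₁ hr₁
      refine ⟨i₂, ?_, fun t ht => ?_⟩
      · intro m hm j
        rw [hag₂ m (by omega) j, hag₁ m hm j]
      · simp only [tr]
        exact ⟨(tr_invariant φ r c hrc t i₁ i₂
            (fun m hm j => (hag₂ m hm j).symm) 0).mp (hs₁ t ht), hs₂ t ht⟩
  | next φ ih =>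
      intro hf hlf T i r c hrc hsat interp hr
      obtain ⟨i₁, hag₁, hs₁⟩ := ih hf hlf T (i+1) c (c+1) (by omega) hsat
        (Function.update interp c (fun j => j = i + 1))
        (fun j => by rw [Function.update_self])
      have hr' : ∀ j, i₁ r j ↔ j = i := by
        intro j
        rw [hag₁ r (by omega) j, Function.update_of_ne (by omega)]
        exact hr j
      have hc : ∀ m, i₁ c m ↔ m = i + 1 := by
        intro m
        rw [hag₁ c (by omega) m, Function.update_self]
      refine ⟨i₁, ?_, fun t ht => ?_⟩
      · intro m hm j
        rw [hag₁ m (by omega) j, Function.update_of_ne (by omega)]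
      · simp only [tr]
        refine ⟨?_, hs₁ t ht⟩
        rw [sat_gG]
        intro m _
        constructor
        · by_cases hmi : m = i
          · exact Or.inr (show i₁ c (m+1) from (hc (m+1)).mpr (by omega))
          · exact Or.inl (show ¬ i₁ r m from fun h => hmi ((hr' m).mp h))
        · by_cases hmi : m = i
          · exact Or.inr (show i₁ r m from (hr' m).mpr hmi)
          · refine Or.inl (show ¬ i₁ c (m+1) from fun h => hmi ?_)
            have := (hc (m+1)).mp h
            omega
  | luntil φ ψ ih₁ ih₂ =>
      intro hf hlf T i r c hrc hsat interp hr
      obtain ⟨hFlat, hlf₁, hlf₂⟩ := hlf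
      have hf₁ : φ.exts ⊆ {TExt.bdis, TExt.asub1} := fun x hx => hf (Or.inl hx)
      have hf₂ : ψ.exts ⊆ {TExt.bdis, TExt.asub1} := fun x hx => hf (Or.inr hx)
      obtain ⟨k, hik, hψ, hφ⟩ := hsat
      obtain ⟨i₁, hag₁, hs₁⟩ := ih₂ hf₂ hlf₂ T k (c+1) (c+2) (by omega) hψ
        (Function.update (Function.update interp c (fun m => i ≤ m ∧ m < k))
          (c+1) (fun j => j = k))
        (fun j => by rw [Function.update_self])
      have hic : ∀ m, i₁ c m ↔ (i ≤ m ∧ m < k) := by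
        intro m
        rw [hag₁ c (by omega) m, Function.update_of_ne (by omega), Function.update_self]
      have hic1 : ∀ m, i₁ (c+1) m ↔ m = k := by
        intro m
        rw [hag₁ (c+1) (by omega) m, Function.update_self]
      have hir : ∀ m, i₁ r m ↔ m = i := by
        intro m
        rw [hag₁ r (by omega) m, Function.update_of_ne (by omega),
          Function.update_of_ne (by omega)]
        exact hr m
      refine ⟨i₁, ?_, fun t ht => ?_⟩
      · intro m hm j
        rw [hag₁ m (by omega) j, Function.update_of_ne (by omega),
          Function.update_of_ne (by omega)]
      · simp only [tr]
        refine ⟨?_, ?_, hs₁ t ht⟩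
        · rw [sat_gG]
          intro m _
          rw [sat_implA]
          intro hm
          have hmi : m = i := (hir m).mp hm
          subst hmi
          refine ⟨k, hik, ⟨(hic1 k).mpr rfl, ?_⟩, fun m' hm1 hm2 =>
            show i₁ c m' from (hic m').mpr ⟨hm1, hm2⟩⟩
          show QF.sat (fun _ : Unit => aug t i₁) (k+1) (gG (natomP (c+1)))
          rw [sat_gG]
          intro j hj
          exact fun h => by have := (hic1 j).mp h; omega
        · rw [sat_gG]
          intro m _
          rw [sat_implA]
          intro hm
          have hcm := (hic m).mp hm
          exact (sat_hat φ hf₁ t i₁ m).mp ((hFlat T m).mp (hφ m hcm.1 hcm.2) t ht)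
  | wuntil φ ψ ih₁ ih₂ =>
      intro hf hlf T i r c hrc hsat interp hr
      obtain ⟨hFlat, hlf₁, hlf₂⟩ := hlf
      have hf₁ : φ.exts ⊆ {TExt.bdis, TExt.asub1} := fun x hx => hf (Or.inl hx)
      have hf₂ : ψ.exts ⊆ {TExt.bdis, TExt.asub1} := fun x hx => hf (Or.inr hx)
      by_cases hex : ∃ k, i ≤ k ∧ TeamForm.sat T k ψ
      · obtain ⟨hik, hψ⟩ := Nat.find_spec hex
        set k := Nat.find hex with hkdef
        have hφ : ∀ m, i ≤ m → m < k → TeamForm.sat T m φ := by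
          intro m him hmk
          rcases hsat m him with h | ⟨m', hm1, hm2, hm3⟩
          · exact h
          · exact absurd (⟨hm1, hm3⟩ : _ ∧ _) (Nat.find_min hex (by omega))
        obtain ⟨i₁, hag₁, hs₁⟩ := ih₂ hf₂ hlf₂ T k (c+1) (c+2) (by omega) hψ
          (Function.update (Function.update interp c (fun m => i ≤ m ∧ m < k))
            (c+1) (fun j => j = k))
          (fun j => by rw [Function.update_self])
        have hic : ∀ m, i₁ c m ↔ (i ≤ m ∧ m < k) := by
          intro m
          rw [hag₁ c (by omega) m, Function.update_of_ne (by omega), Function.update_self]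
        have hic1 : ∀ m, i₁ (c+1) m ↔ m = k := by
          intro m
          rw [hag₁ (c+1) (by omega) m, Function.update_self]
        have hir : ∀ m, i₁ r m ↔ m = i := by
          intro m
          rw [hag₁ r (by omega) m, Function.update_of_ne (by omega),
            Function.update_of_ne (by omega)]
          exact hr m
        refine ⟨i₁, ?_, fun t ht => ?_⟩
        · intro m hm j
          rw [hag₁ m (by omega) j, Function.update_of_ne (by omega),
            Function.update_of_ne (by omega)]
        · simp only [tr]
          refine ⟨?_, ?_, hs₁ t ht⟩
          · rw [sat_gG]
            intro m _
            rw [sat_implA]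
            intro hm
            have hmi : m = i := (hir m).mp hm
            subst hmi
            intro k' hk'
            by_cases hkk : k' < k
            · exact Or.inl (show i₁ c k' from (hic k').mpr ⟨hk', hkk⟩)
            · refine Or.inr ⟨k, hik, by omega, ⟨(hic1 k).mpr rfl, ?_⟩⟩
              show QF.sat (fun _ : Unit => aug t i₁) (k+1) (gG (natomP (c+1)))
              rw [sat_gG]
              intro j hj
              exact fun h => by have := (hic1 j).mp h; omega
          · rw [sat_gG]
            intro m _
            rw [sat_implA]
            intro hm
            have hcm := (hic m).mp hm
            exact (sat_hat φ hf₁ t i₁ m).mp ((hFlat T m).mp (hφ m hcm.1 hcm.2) t ht)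
      · push_neg at hex
        have hφ : ∀ m, i ≤ m → TeamForm.sat T m φ := by
          intro m him
          rcases hsat m him with h | ⟨m', hm1, hm2, hm3⟩
          · exact h
          · exact absurd hm3 (hex m' hm1)
        obtain ⟨i₁, hag₁, hs₁⟩ := tr_vac ψ (c+1) (c+2) (by omega)
          (Function.update (Function.update interp c (fun m => i ≤ m))
            (c+1) (fun _ => False))
          (fun j h => by rw [Function.update_self] at h; exact h)
        have hic : ∀ m, i₁ c m ↔ i ≤ m := by
          intro m
          rw [hag₁ c (by omega) m, Function.update_of_ne (by omega), Function.update_self]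
        have hir : ∀ m, i₁ r m ↔ m = i := by
          intro m
          rw [hag₁ r (by omega) m, Function.update_of_ne (by omega),
            Function.update_of_ne (by omega)]
          exact hr m
        refine ⟨i₁, ?_, fun t ht => ?_⟩
        · intro m hm j
          rw [hag₁ m (by omega) j, Function.update_of_ne (by omega),
            Function.update_of_ne (by omega)]
        · simp only [tr]
          refine ⟨?_, ?_, hs₁ t⟩
          · rw [sat_gG]
            intro m _
            rw [sat_implA]
            intro hm
            have hmi : m = i := (hir m).mp hm
            subst hmi
            intro k' hk'
            exact Or.inl (show i₁ c k' from (hic k').mpr hk')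
          · rw [sat_gG]
            intro m _
            rw [sat_implA]
            intro hm
            have hcm := (hic m).mp hm
            exact (sat_hat φ hf₁ t i₁ m).mp ((hFlat T m).mp (hφ m hcm) t ht)
  | bdis φ ψ ih₁ ih₂ =>
      intro hf hlf T i r c hrc hsat interp hr
      obtain ⟨hlf₁, hlf₂⟩ := hlf
      have hf₁ : φ.exts ⊆ {TExt.bdis, TExt.asub1} :=
        fun x hx => hf (Set.mem_insert_of_mem _ (Or.inl hx))
      have hf₂ : ψ.exts ⊆ {TExt.bdis, TExt.asub1} :=
        fun x hx => hf (Set.mem_insert_of_mem _ (Or.inr hx))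
      have hmono₁ := tr_mono φ r (c+1)
      rcases hsat with hsat | hsat
      · obtain ⟨i₁, hag₁, hs₁⟩ := ih₁ hf₁ hlf₁ T i r (c+1) (by omega) hsat
          (Function.update interp c (fun _ => True))
          (fun j => by rw [Function.update_of_ne (by omega)]; exact hr j)
        refine ⟨i₁, ?_, fun t ht => ?_⟩
        · intro m hm j
          rw [hag₁ m (by omega) j, Function.update_of_ne (by omega)]
        · simp only [tr]
          refine ⟨Or.inr (hs₁ t ht), Or.inl ?_⟩
          show i₁ c 0
          rw [hag₁ c (by omega) 0, Function.update_self]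
          trivial
      · obtain ⟨i₁, hag₁, hs₁⟩ := ih₂ hf₂ hlf₂ T i r (tr φ r (c+1)).2 (by omega) hsat
          (Function.update interp c (fun _ => False))
          (fun j => by rw [Function.update_of_ne (by omega)]; exact hr j)
        refine ⟨i₁, ?_, fun t ht => ?_⟩
        · intro m hm j
          rw [hag₁ m (by omega) j, Function.update_of_ne (by omega)]
        · simp only [tr]
          refine ⟨Or.inl ?_, Or.inr (hs₁ t ht)⟩
          show ¬ i₁ c 0
          rw [hag₁ c (by omega) 0, Function.update_self]
          exact fun h => h
  | bneg φ ih =>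
      intro hf _ _ _ _ _ _ _ _ _
      have hx := hf (Set.mem_insert _ _); simp at hx
  | incl ps =>
      intro hf _ _ _ _ _ _ _ _ _
      have hx := hf rfl; simp at hx
  | asub φ ih =>
      intro hf _ _ _ _ _ _ _ _ _
      have hx := hf (Set.mem_insert _ _); simp at hx
  | asub1 φ ih =>
      intro hf hlf T i r c hrc hsat interp hr
      have hf₁ : φ.exts ⊆ {TExt.bdis, TExt.asub1} :=
        fun x hx => hf (Set.mem_insert_of_mem _ hx)
      refine ⟨interp, fun m _ j => Iff.rfl, fun t ht => ?_⟩
      simp only [tr]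
      rw [sat_gG]
      intro m _
      rw [sat_implA]
      intro hm
      have hmi : m = i := (hr m).mp hm
      subst hmi
      exact (sat_hat φ hf₁ t interp m).mp (hsat t ht)
  | nebot =>
      intro hf _ _ _ _ _ _ _ _ _
      have hx := hf rfl; simp at hx

lemma tr_bwd (φ : TeamForm α) :
    φ.exts ⊆ {TExt.bdis, TExt.asub1} → LeftFlat φ →
    ∀ (T : Set (Trace α)) (i r c : ℕ), r < c →
    ∀ interp : ℕ → ℕ → Prop, interp r i →
    (∀ t ∈ T, QF.sat (fun _ : Unit => aug t interp) 0 (tr φ r c).1) →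
    TeamForm.sat T i φ := by
  induction φ with
  | pos p =>
      intro hf hlf T i r c hrc interp hri hs t ht
      have h0 : QF.sat (fun _ : Unit => aug t interp) 0
          (gG (implA r (QF.pos (Sum.inl p) ()))) := hs t ht
      have h1 := sat_gG.mp h0 i (Nat.zero_le i)
      rw [sat_implA] at h1
      exact h1 hri
  | neg p =>
      intro hf hlf T i r c hrc interp hri hs t ht
      have h0 : QF.sat (fun _ : Unit => aug t interp) 0
          (gG (implA r (QF.neg (Sum.inl p) ()))) := hs t ht
      have h1 := sat_gG.mp h0 i (Nat.zero_le i)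
      rw [sat_implA] at h1
      exact h1 hri
  | lor φ ψ ih₁ ih₂ =>
      intro hf hlf T i r c hrc interp hri hs
      obtain ⟨hlf₁, hlf₂⟩ := hlf
      have hf₁ : φ.exts ⊆ {TExt.bdis, TExt.asub1} := fun x hx => hf (Or.inl hx)
      have hf₂ : ψ.exts ⊆ {TExt.bdis, TExt.asub1} := fun x hx => hf (Or.inr hx)
      have hmono := tr_mono φ r c
      have hs' : ∀ t ∈ T, QF.sat (fun _ : Unit => aug t interp) 0 (tr φ r c).1 ∨
          QF.sat (fun _ : Unit => aug t interp) 0 (tr ψ r (tr φ r c).2).1 :=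
        fun t ht => hs t ht
      refine ⟨{t ∈ T | QF.sat (fun _ : Unit => aug t interp) 0 (tr φ r c).1},
        {t ∈ T | ¬ QF.sat (fun _ : Unit => aug t interp) 0 (tr φ r c).1}, ?_, ?_, ?_⟩
      · ext t
        constructor
        · rintro (⟨ht, _⟩ | ⟨ht, _⟩) <;> exact ht
        · intro ht
          by_cases h : QF.sat (fun _ : Unit => aug t interp) 0 (tr φ r c).1
          · exact Or.inl ⟨ht, h⟩
          · exact Or.inr ⟨ht, h⟩
      · exact ih₁ hf₁ hlf₁ _ i r c hrc interp hri (fun t ht => ht.2)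
      · refine ih₂ hf₂ hlf₂ _ i r (tr φ r c).2 (by omega) interp hri ?_
        intro t ht
        rcases hs' t ht.1 with h | h
        · exact absurd h ht.2
        · exact h
  | land φ ψ ih₁ ih₂ =>
      intro hf hlf T i r c hrc interp hri hs
      obtain ⟨hlf₁, hlf₂⟩ := hlf
      have hf₁ : φ.exts ⊆ {TExt.bdis, TExt.asub1} := fun x hx => hf (Or.inl hx)
      have hf₂ : ψ.exts ⊆ {TExt.bdis, TExt.asub1} := fun x hx => hf (Or.inr hx)
      have hmono := tr_mono φ r c
      have hs' : ∀ t ∈ T, QF.sat (fun _ : Unit => aug t interp) 0 (tr φ r c).1 ∧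
          QF.sat (fun _ : Unit => aug t interp) 0 (tr ψ r (tr φ r c).2).1 :=
        fun t ht => hs t ht
      exact ⟨ih₁ hf₁ hlf₁ T i r c hrc interp hri (fun t ht => (hs' t ht).1),
        ih₂ hf₂ hlf₂ T i r (tr φ r c).2 (by omega) interp hri (fun t ht => (hs' t ht).2)⟩
  | next φ ih =>
      intro hf hlf T i r c hrc interp hri hs
      rcases Set.eq_empty_or_nonempty T with rfl | ⟨t₀, ht₀⟩
      · exact sat_empty _ hf i
      · have hs' : ∀ t ∈ T, QF.sat (fun _ : Unit => aug t interp) 0 (gG (iffNx r c)) ∧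
            QF.sat (fun _ : Unit => aug t interp) 0 (tr φ c (c+1)).1 :=
          fun t ht => hs t ht
        have hc : interp c (i+1) := by
          have h1 := sat_gG.mp (hs' t₀ ht₀).1 i (Nat.zero_le i)
          have h2 : (¬ interp r i) ∨ interp c (i+1) := h1.1
          rcases h2 with h | h
          · exact absurd hri h
          · exact h
        exact ih hf hlf T (i+1) c (c+1) (by omega) interp hc (fun t ht => (hs' t ht).2)
  | luntil φ ψ ih₁ ih₂ =>
      intro hf hlf T i r c hrc interp hri hs
      obtain ⟨hFlat, hlf₁, hlf₂⟩ := hlf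
      have hf₁ : φ.exts ⊆ {TExt.bdis, TExt.asub1} := fun x hx => hf (Or.inl hx)
      have hf₂ : ψ.exts ⊆ {TExt.bdis, TExt.asub1} := fun x hx => hf (Or.inr hx)
      rcases Set.eq_empty_or_nonempty T with rfl | ⟨t₀, ht₀⟩
      · exact ⟨i, le_refl i, sat_empty ψ hf₂ i, fun m _ _ => sat_empty φ hf₁ m⟩
      · have hs' : ∀ t ∈ T, QF.sat (fun _ : Unit => aug t interp) 0
            (gG (implA r (QF.luntil (atomP c)
              (QF.land (atomP (c+1)) (QF.next (gG (natomP (c+1)))))))) ∧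
            QF.sat (fun _ : Unit => aug t interp) 0 (gG (implA c (hat φ))) ∧
            QF.sat (fun _ : Unit => aug t interp) 0 (tr ψ (c+1) (c+2)).1 :=
          fun t ht => hs t ht
        have h1 := sat_gG.mp (hs' t₀ ht₀).1 i (Nat.zero_le i)
        rw [sat_implA] at h1
        obtain ⟨k, hik, hland, hC⟩ : ∃ k, i ≤ k ∧ (interp (c+1) k ∧
            QF.sat (fun _ : Unit => aug t₀ interp) (k+1) (gG (natomP (c+1)))) ∧
            ∀ m, i ≤ m → m < k → interp c m := h1 hri
        refine ⟨k, hik, ?_, ?_⟩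
        · exact ih₂ hf₂ hlf₂ T k (c+1) (c+2) (by omega) interp hland.1
            (fun t ht => (hs' t ht).2.2)
        · intro m hm1 hm2
          refine (hFlat T m).mpr (fun t ht => ?_)
          have h3 := sat_gG.mp (hs' t ht).2.1 m (Nat.zero_le m)
          rw [sat_implA] at h3
          exact (sat_hat φ hf₁ t interp m).mpr (h3 (hC m hm1 hm2))
  | wuntil φ ψ ih₁ ih₂ =>
      intro hf hlf T i r c hrc interp hri hs
      obtain ⟨hFlat, hlf₁, hlf₂⟩ := hlf
      have hf₁ : φ.exts ⊆ {TExt.bdis, TExt.asub1} := fun x hx => hf (Or.inl hx)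
      have hf₂ : ψ.exts ⊆ {TExt.bdis, TExt.asub1} := fun x hx => hf (Or.inr hx)
      rcases Set.eq_empty_or_nonempty T with rfl | ⟨t₀, ht₀⟩
      · intro k _
        exact Or.inl (sat_empty φ hf₁ k)
      · have hs' : ∀ t ∈ T, QF.sat (fun _ : Unit => aug t interp) 0
            (gG (implA r (QF.wuntil (atomP c)
              (QF.land (atomP (c+1)) (QF.next (gG (natomP (c+1)))))))) ∧
            QF.sat (fun _ : Unit => aug t interp) 0 (gG (implA c (hat φ))) ∧
            QF.sat (fun _ : Unit => aug t interp) 0 (tr ψ (c+1) (c+2)).1 :=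
          fun t ht => hs t ht
        have h1 := sat_gG.mp (hs' t₀ ht₀).1 i (Nat.zero_le i)
        rw [sat_implA] at h1
        have h2 : ∀ k, i ≤ k → interp c k ∨ ∃ m, i ≤ m ∧ m ≤ k ∧ (interp (c+1) m ∧
            QF.sat (fun _ : Unit => aug t₀ interp) (m+1) (gG (natomP (c+1)))) :=
          h1 hri
        intro k hk
        rcases h2 k hk with h | ⟨m, hm1, hm2, hm3⟩
        · refine Or.inl ((hFlat T k).mpr (fun t ht => ?_))
          have h3 := sat_gG.mp (hs' t ht).2.1 k (Nat.zero_le k)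
          rw [sat_implA] at h3
          exact (sat_hat φ hf₁ t interp k).mpr (h3 h)
        · exact Or.inr ⟨m, hm1, hm2, ih₂ hf₂ hlf₂ T m (c+1) (c+2) (by omega) interp hm3.1
            (fun t ht => (hs' t ht).2.2)⟩
  | bdis φ ψ ih₁ ih₂ =>
      intro hf hlf T i r c hrc interp hri hs
      obtain ⟨hlf₁, hlf₂⟩ := hlf
      have hf₁ : φ.exts ⊆ {TExt.bdis, TExt.asub1} :=
        fun x hx => hf (Set.mem_insert_of_mem _ (Or.inl hx))
      have hf₂ : ψ.exts ⊆ {TExt.bdis, TExt.asub1} :=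
        fun x hx => hf (Set.mem_insert_of_mem _ (Or.inr hx))
      have hmono := tr_mono φ r (c+1)
      have hs' : ∀ t ∈ T, ((¬ interp c 0) ∨
          QF.sat (fun _ : Unit => aug t interp) 0 (tr φ r (c+1)).1) ∧
          (interp c 0 ∨
          QF.sat (fun _ : Unit => aug t interp) 0 (tr ψ r (tr φ r (c+1)).2).1) :=
        fun t ht => hs t ht
      by_cases hd : interp c 0
      · refine Or.inl (ih₁ hf₁ hlf₁ T i r (c+1) (by omega) interp hri ?_)
        intro t ht
        rcases (hs' t ht).1 with h | h
        · exact absurd hd h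
        · exact h
      · refine Or.inr (ih₂ hf₂ hlf₂ T i r (tr φ r (c+1)).2 (by omega) interp hri ?_)
        intro t ht
        rcases (hs' t ht).2 with h | h
        · exact absurd h hd
        · exact h
  | bneg φ ih =>
      intro hf _ _ _ _ _ _ _ _ _
      have hx := hf (Set.mem_insert _ _); simp at hx
  | incl ps =>
      intro hf _ _ _ _ _ _ _ _ _
      have hx := hf rfl; simp at hx
  | asub φ ih =>
      intro hf _ _ _ _ _ _ _ _ _
      have hx := hf (Set.mem_insert _ _); simp at hx
  | asub1 φ ih =>
      intro hf hlf T i r c hrc interp hri hs t ht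
      have h0 : QF.sat (fun _ : Unit => aug t interp) 0 (gG (implA r (hat φ))) := hs t ht
      have h1 := sat_gG.mp h0 i (Nat.zero_le i)
      rw [sat_implA] at h1
      exact (sat_hat φ (fun x hx => hf (Set.mem_insert_of_mem _ hx)) t interp i).mpr (h1 hri)
  | nebot =>
      intro hf _ _ _ _ _ _ _ _ _
      have hx := hf rfl; simp at hx

end Lemmas

/-- Let `φ` be a formula of the left-flat fragment of
`TeamLTL(⩔,A¹)`, let `i ∈ ℕ`, and let the sequence `s` interpret the fresh
proposition `r` (of index `0`) to hold exactly at position `i`.  Then for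
every team `(T,i)`:  `(T,i) ⊨ φ` iff
`∅,0 ⊨_{T[r↦s]} ∃r¹…∃rⁿ.∀π.[φ,r]`, i.e. iff there are (uniform)
interpretations of the fresh propositions `r¹,…,rⁿ` under which every trace
of `T` (lifted to the extended set of propositions) satisfies the
quantifier-free matrix `[φ,r]` at time `0`. -/
theorem stmt_12 (φ : TeamForm α) (hfrag : φ.exts ⊆ {TExt.bdis, TExt.asub1})
    (hlf : LeftFlat φ) (T : Set (Trace α)) (i : ℕ) :
    TeamForm.sat T i φ ↔
      ∃ interp : ℕ → ℕ → Prop,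
        (∀ j, interp 0 j ↔ j = i) ∧
        ∀ t ∈ T, QF.sat (fun _ : Unit => aug t interp) 0 (tr φ 0 1).1 := by
  constructor
  · intro hsat
    obtain ⟨interp', hag, hs⟩ := tr_fwd φ hfrag hlf T i 0 1 Nat.one_pos hsat
      (fun m j => m = 0 ∧ j = i) (fun j => by simp)
    refine ⟨interp', fun j => ?_, hs⟩
    rw [hag 0 Nat.one_pos j]
    simp
  · rintro ⟨interp, h0, hs⟩
    exact tr_bwd φ hfrag hlf T i 0 1 Nat.one_pos interp ((h0 i).mpr rfl) hs

end Stmt12
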